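/- If D is a nonempty finite oriented graph in which every vertex has in-degree at least 1 (i.e. D has no source), then the cop number of D is at least 2. -/

import Mathlib

open Classical

universe u

namespace CopsRobbers

variable {V : Type u}

/-- `CatchIn A k t c r` holds when, in the cops-and-robbers game on the digraph
with arc relation `A`, with the `k` cops currently at positions `c`, the robber
currently at `r`, and the cops to move, the cops can guarantee that some cop
occupies the robber's vertex within `t` further rounds (in each round every cop
either stays or moves along an out-arc, then the robber either stays or moves
along an out-arc; capture may occur right after the cops' move or after the
robber's move). -/
inductive CatchIn (A : V → V → Prop) (k : ℕ) : ℕ → (Fin k → V) → V → Prop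
  | caught {t : ℕ} {c : Fin k → V} {r : V} (h : ∃ i, c i = r) : CatchIn A k t c r
  | stepCatch {t : ℕ} {c : Fin k → V} {r : V} (c' : Fin k → V)
      (hc : ∀ i, c' i = c i ∨ A (c i) (c' i)) (h : ∃ i, c' i = r) :
      CatchIn A k (t + 1) c r
  | step {t : ℕ} {c : Fin k → V} {r : V} (c' : Fin k → V)
      (hc : ∀ i, c' i = c i ∨ A (c i) (c' i))
      (h : ∀ r' : V, r' = r ∨ A r r' → CatchIn A k t c' r') :
      CatchIn A k (t + 1) c r

/-- `k` cops can choose initial positions guaranteeing capture within `t` rounds,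
no matter which starting vertex the robber then chooses. -/
def CopsWinIn (A : V → V → Prop) (k t : ℕ) : Prop :=
  ∃ c : Fin k → V, ∀ r : V, CatchIn A k t c r

/-- `k` cops have a winning strategy on the digraph with arc relation `A`. -/
def CopsWin (A : V → V → Prop) (k : ℕ) : Prop := ∃ t, CopsWinIn A k t

/-- The cop number of a digraph: the least `k` such that `k` cops have a winning
strategy. -/
noncomputable def copNumber (A : V → V → Prop) : ℕ := sInf {k | CopsWin A k}

/-- The capture time of a digraph: the least `t` such that `copNumber A` cops
can guarantee capture within `t` rounds. -/
noncomputable def captureTime (A : V → V → Prop) : ℕ :=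
  sInf {t | CopsWinIn A (copNumber A) t}

/-- `A` is an orientation of the simple graph `G`: each edge of `G` is given
exactly one direction, and there are no other arcs. -/
def IsOrientation (G : SimpleGraph V) (A : V → V → Prop) : Prop :=
  (∀ u v, G.Adj u v ↔ (A u v ∨ A v u)) ∧ ∀ u v, A u v → ¬ A v u

/-- An oriented graph: a digraph with no loops and no pair of opposite arcs. -/
def IsOriented (A : V → V → Prop) : Prop := ∀ u v, A u v → ¬ A v u

/-- A digraph is strongly connected if every vertex is reachable from every
other by a directed path. -/
def StronglyConnected (A : V → V → Prop) : Prop :=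
  ∀ u v : V, Relation.ReflTransGen A u v


/-!
Zero cops cannot catch anybody. Against one cop, the robber starts on an in-neighbour of the
cop's vertex, which exists as there are no sources, and keeps the invariant that there is an arc
from the robber to the cop: if the cop moves along an arc, the robber follows the arc onto the
vertex the cop just left. Capture would then need a loop or a pair of opposite arcs.
-/

lemma not_catchIn_zero (A : V → V → Prop) {t : ℕ} {c : Fin 0 → V} {r : V} :
    ¬ CatchIn A 0 t c r := by
  intro h
  induction h with
  | caught h => exact h.choose.elim0
  | stepCatch _ _ h => exact h.choose.elim0
  | step _ _ _ ih => exact ih _ (Or.inl rfl)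

lemma not_catchIn_one_of_adj {A : V → V → Prop} (hA : IsOriented A) {t : ℕ} {c : Fin 1 → V}
    {r : V} (h : CatchIn A 1 t c r) : ¬ A r (c 0) := by
  induction h with
  | @caught _ c r h =>
    obtain ⟨i, rfl⟩ := h
    rw [Fin.eq_zero i]
    exact fun hr => hA _ _ hr hr
  | @stepCatch _ c r c' hc h =>
    obtain ⟨i, hi⟩ := h
    rw [Fin.eq_zero i] at hi
    intro hr
    rcases hc 0 with hstay | hmove
    · rw [← hi, hstay] at hr
      exact hA _ _ hr hr
    · exact hA r (c 0) hr (hi ▸ hmove)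
  | @step _ c r c' hc _ ih =>
    intro hr
    rcases hc 0 with hstay | hmove
    · exact ih r (Or.inl rfl) (hstay ▸ hr)
    · exact ih (c 0) (Or.inr hr) hmove

lemma not_copsWin_zero (A : V → V → Prop) [Nonempty V] : ¬ CopsWin A 0 :=
  fun ⟨_, _, hc⟩ => not_catchIn_zero A (hc (Classical.arbitrary V))

lemma not_copsWin_one {A : V → V → Prop} (hA : IsOriented A) (h : ∀ v : V, ∃ u : V, A u v) :
    ¬ CopsWin A 1 := by
  rintro ⟨_, c, hc⟩
  obtain ⟨u, hu⟩ := h (c 0)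
  exact not_catchIn_one_of_adj hA (hc u) hu

lemma copsWin_card (A : V → V → Prop) [Fintype V] : CopsWin A (Fintype.card V) :=
  ⟨0, (Fintype.equivFin V).symm, fun r => .caught ⟨Fintype.equivFin V r, by simp⟩⟩

/-- A nonempty finite oriented graph in which every vertex has in-degree at
least one (no sources) has cop number at least `2`. -/
theorem stmt_15 {V : Type u} [Fintype V] [Nonempty V] (A : V → V → Prop)
    (hA : IsOriented A) (h : ∀ v : V, ∃ u : V, A u v) :
    2 ≤ copNumber A := by
  refine le_csInf ⟨_, copsWin_card A⟩ fun k hk => ?_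
  match k, hk with
  | 0, hk => exact absurd hk (not_copsWin_zero A)
  | 1, hk => exact absurd hk (not_copsWin_one hA h)
  | _ + 2, _ => omega

end CopsRobbers
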